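/- arXiv:1508.06912 — 3 statements merged into one kernel-verified Lean document; each statement's English description precedes it below -/
import Mathlib

section
/- Let U_{n,m,γ}(x) = ∑_{k=0}^∞ p_{n,k,γ}(x)·(k/n − x)^m. Then for all m ≥ 1 and x ≥ 0, the recurrence n·U_{n,m+1,γ}(x) = x(1+γx)·(U'_{n,m,γ}(x) + m·U_{n,m−1,γ}(x)) holds, where the derivative is with respect to x. -/
open MeasureTheory Filter Real

noncomputable def p (n γ : ℝ) (k : ℕ) (x : ℝ) : ℝ :=
  Real.Gamma (n / γ + (k : ℝ)) / (Real.Gamma ((k : ℝ) + 1) * Real.Gamma (n / γ)) *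
    (γ * x) ^ k / (1 + γ * x) ^ (n / γ + (k : ℝ))

noncomputable def U (n : ℝ) (m : ℕ) (γ x : ℝ) : ℝ :=
  ∑' k : ℕ, p n γ k x * ((k : ℝ) / n - x) ^ m

/-!
Each basis function satisfies `y (1 + γ y) p' = (k - n y) p = n (k/n - y) p`. Hence differentiating
`p (k/n - y)^m` gives one term in which the power of `k/n - y` goes up by one (from `p'`) and one in
which it goes down by one, and summing over `k` yields
`y (1 + γ y) U_m' = n U_{m+1} - m y (1 + γ y) U_{m-1}`. Term-by-term differentiation is justified
on `(x/2, 2x)` by the majorant `baskakovCoeff (n/γ) k · ((k+1) (1/n + 2x))^j · T^k` with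
`T = 2γx / (1 + 2γx) < 1`, which is summable by the ratio test. At `x = 0` both sides vanish.
-/

open Topology

noncomputable def baskakovCoeff (a : ℝ) (k : ℕ) : ℝ :=
  Gamma (a + k) / (Gamma ((k : ℝ) + 1) * Gamma a)

section baskakovCoeff

variable {a : ℝ}

theorem baskakovCoeff_pos (ha : 0 < a) (k : ℕ) : 0 < baskakovCoeff a k := by
  unfold baskakovCoeff
  have := Gamma_pos_of_pos (show 0 < a + k by positivity)
  have := Gamma_pos_of_pos (show (0 : ℝ) < k + 1 by positivity)
  have := Gamma_pos_of_pos ha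
  positivity

theorem baskakovCoeff_succ (ha : 0 < a) (k : ℕ) :
    baskakovCoeff a (k + 1) = (a + k) / (k + 1) * baskakovCoeff a k := by
  have h₁ : Gamma (a + ↑(k + 1)) = (a + k) * Gamma (a + k) := by
    rw [Nat.cast_succ, ← add_assoc, Gamma_add_one (by positivity : a + (k : ℝ) ≠ 0)]
  have h₂ : Gamma (↑(k + 1) + 1) = (k + 1) * Gamma (k + 1) := by
    rw [Nat.cast_succ, Gamma_add_one (by positivity)]
  have := (Gamma_pos_of_pos (show (0 : ℝ) < k + 1 by positivity)).ne'
  have := (Gamma_pos_of_pos ha).ne'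
  simp only [baskakovCoeff, h₁, h₂]
  field_simp

theorem summable_baskakovCoeff_mul_pow_mul_geometric (ha : 0 < a) (j : ℕ) {T : ℝ}
    (hT₀ : 0 < T) (hT₁ : T < 1) :
    Summable fun k : ℕ => baskakovCoeff a k * ((k : ℝ) + 1) ^ j * T ^ k := by
  refine summable_of_ratio_test_tendsto_lt_one hT₁
    (.of_forall fun k => (by have := baskakovCoeff_pos ha k; positivity)) ?_
  have hratio : Tendsto
      (fun k : ℕ => (a + 1 * k) / (1 + 1 * k) * ((2 + 1 * k) / (1 + 1 * k)) ^ j * T) atTop (𝓝 T) := by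
    simpa using ((tendsto_add_mul_div_add_mul_atTop_nhds a 1 (1 : ℝ) one_ne_zero).mul
      ((tendsto_add_mul_div_add_mul_atTop_nhds 2 1 (1 : ℝ) one_ne_zero).pow j)).mul_const T
  refine hratio.congr fun k => ?_
  have := baskakovCoeff_pos ha k
  have := baskakovCoeff_pos ha (k + 1)
  rw [Real.norm_of_nonneg (by positivity), Real.norm_of_nonneg (by positivity),
    baskakovCoeff_succ ha]
  push_cast
  rw [div_pow]
  field_simp
  ring

end baskakovCoeff

section moments

variable {n γ : ℝ}

theorem p_eq_baskakovCoeff (k : ℕ) (x : ℝ) :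
    p n γ k x = baskakovCoeff (n / γ) k * (γ * x) ^ k / (1 + γ * x) ^ (n / γ + k) := rfl

theorem hasDerivAt_p (hγ : 0 < γ) (k : ℕ) {y : ℝ} (hy : 0 < y) :
    HasDerivAt (p n γ k) ((k - n * y) / (y * (1 + γ * y)) * p n γ k y) y := by
  have hz : 0 < 1 + γ * y := by positivity
  have hlin : HasDerivAt (fun z => γ * z) γ y := by simpa using (hasDerivAt_id y).const_mul γ
  have hnum := (hlin.pow k).const_mul (baskakovCoeff (n / γ) k)
  have hden := (hlin.const_add 1).rpow_const (p := n / γ + k) (Or.inl hz.ne')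
  have hpow : (k : ℝ) * (γ * y) ^ (k - 1) * γ * y = k * (γ * y) ^ k := by
    rcases k with _ | k
    · simp
    · simp only [Nat.add_sub_cancel, pow_succ]; ring
  refine (hnum.div hden (rpow_pos_of_pos hz _).ne').congr_deriv ?_
  rw [rpow_sub_one hz.ne', p_eq_baskakovCoeff, Pi.pow_apply]
  field_simp
  linear_combination baskakovCoeff (n / γ) k * (1 + γ * y) * hpow

theorem p_nonneg (hγ : 0 < γ) (hn : 0 < n) (k : ℕ) {y : ℝ} (hy : 0 ≤ y) : 0 ≤ p n γ k y := by
  have := baskakovCoeff_pos (by positivity : 0 < n / γ) k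
  rw [p_eq_baskakovCoeff]
  positivity

theorem p_le_of_le (hγ : 0 < γ) (hn : 0 < n) (k : ℕ) {y b : ℝ} (hy : 0 ≤ y) (hyb : y ≤ b) :
    p n γ k y ≤ baskakovCoeff (n / γ) k * (γ * b / (1 + γ * b)) ^ k := by
  have hz : 0 < 1 + γ * y := by positivity
  have := baskakovCoeff_pos (by positivity : 0 < n / γ) k
  have hsplit : p n γ k y =
      baskakovCoeff (n / γ) k * (γ * y / (1 + γ * y)) ^ k / (1 + γ * y) ^ (n / γ) := by
    rw [p_eq_baskakovCoeff, rpow_add hz, rpow_natCast, div_pow]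
    field_simp
  have hmono : γ * y / (1 + γ * y) ≤ γ * b / (1 + γ * b) := by
    rw [div_le_div_iff₀ hz (by nlinarith)]
    nlinarith
  rw [hsplit]
  calc _ ≤ baskakovCoeff (n / γ) k * (γ * y / (1 + γ * y)) ^ k :=
        div_le_self (by positivity) (one_le_rpow (by nlinarith) (by positivity))
    _ ≤ _ := by gcongr

noncomputable def centralMomentTerm (n γ : ℝ) (m k : ℕ) (y : ℝ) : ℝ :=
  p n γ k y * ((k : ℝ) / n - y) ^ m

noncomputable def centralMomentMajorant (n γ b : ℝ) (j k : ℕ) : ℝ :=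
  baskakovCoeff (n / γ) k * ((k : ℝ) + 1) ^ j * (γ * b / (1 + γ * b)) ^ k * (1 / n + b) ^ j

theorem abs_centralMomentTerm_le (hγ : 0 < γ) (hn : 0 < n) (j k : ℕ) {y b : ℝ} (hy : 0 ≤ y)
    (hyb : y ≤ b) : |centralMomentTerm n γ j k y| ≤ centralMomentMajorant n γ b j k := by
  have hdev : |(k : ℝ) / n - y| ≤ ((k : ℝ) + 1) * (1 / n + b) := by
    have := div_nonneg (Nat.cast_nonneg k : (0 : ℝ) ≤ k) hn.le
    have := mul_nonneg (Nat.cast_nonneg k : (0 : ℝ) ≤ k) (hy.trans hyb)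
    rw [abs_le, show ((k : ℝ) + 1) * (1 / n + b) = k / n + k * b + 1 / n + b by ring]
    constructor <;> linarith [one_div_pos.mpr hn]
  have := baskakovCoeff_pos (by positivity : 0 < n / γ) k
  calc |centralMomentTerm n γ j k y| = p n γ k y * |(k : ℝ) / n - y| ^ j := by
        rw [centralMomentTerm, abs_mul, abs_pow, abs_of_nonneg (p_nonneg hγ hn k hy)]
    _ ≤ baskakovCoeff (n / γ) k * (γ * b / (1 + γ * b)) ^ k *
          (((k : ℝ) + 1) * (1 / n + b)) ^ j := by
        have : 0 ≤ b := hy.trans hyb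
        gcongr
        exact p_le_of_le hγ hn k hy hyb
    _ = centralMomentMajorant n γ b j k := by
        rw [centralMomentMajorant, mul_pow]
        ring

theorem summable_centralMomentMajorant (hγ : 0 < γ) (hn : 0 < n) (j : ℕ) {b : ℝ} (hb : 0 < b) :
    Summable (centralMomentMajorant n γ b j) := by
  have hz : 0 < 1 + γ * b := by positivity
  exact (summable_baskakovCoeff_mul_pow_mul_geometric (by positivity) j (by positivity)
    ((div_lt_one hz).mpr (by linarith))).mul_right _

theorem summable_centralMomentTerm (hγ : 0 < γ) (hn : 0 < n) (j : ℕ) {y : ℝ} (hy : 0 < y) :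
    Summable (centralMomentTerm n γ j · y) :=
  .of_norm_bounded (summable_centralMomentMajorant hγ hn j hy) fun k =>
    abs_centralMomentTerm_le hγ hn j k hy.le le_rfl

theorem hasDerivAt_centralMomentTerm (hγ : 0 < γ) (hn : 0 < n) (m k : ℕ) {y : ℝ} (hy : 0 < y) :
    HasDerivAt (centralMomentTerm n γ m k)
      (n / (y * (1 + γ * y)) * centralMomentTerm n γ (m + 1) k y -
        m * centralMomentTerm n γ (m - 1) k y) y := by
  have hdev : HasDerivAt (fun z => (k : ℝ) / n - z) (-1) y := by
    simpa using (hasDerivAt_id y).const_sub ((k : ℝ) / n)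
  refine ((hasDerivAt_p hγ k hy).mul (hdev.pow m)).congr_deriv ?_
  have : (1 + γ * y) ≠ 0 := by positivity
  simp only [centralMomentTerm, Pi.pow_apply, pow_succ]
  field_simp
  ring

theorem hasDerivAt_U (hγ : 0 < γ) (hn : 0 < n) (m : ℕ) {x : ℝ} (hx : 0 < x) :
    HasDerivAt (U n m γ) (n / (x * (1 + γ * x)) * U n (m + 1) γ x - m * U n (m - 1) γ x) x := by
  have hxt : x ∈ Set.Ioo (x / 2) (2 * x) := ⟨by linarith, by linarith⟩
  have hbound : ∀ k, ∀ y ∈ Set.Ioo (x / 2) (2 * x),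
      ‖n / (y * (1 + γ * y)) * centralMomentTerm n γ (m + 1) k y -
        m * centralMomentTerm n γ (m - 1) k y‖ ≤
      2 * n / x * centralMomentMajorant n γ (2 * x) (m + 1) k +
        m * centralMomentMajorant n γ (2 * x) (m - 1) k := by
    rintro k y ⟨hy₁, hy₂⟩
    have hy : 0 < y := by linarith
    have hweight : n / (y * (1 + γ * y)) ≤ 2 * n / x := by
      rw [div_le_div_iff₀ (by positivity) hx]
      nlinarith [mul_pos hn (mul_pos hγ (mul_pos hy hy))]
    rw [Real.norm_eq_abs]
    refine (abs_sub _ _).trans (add_le_add ?_ ?_) <;> rw [abs_mul, abs_of_nonneg (by positivity)]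
    · exact mul_le_mul hweight (abs_centralMomentTerm_le hγ hn _ k hy.le hy₂.le) (abs_nonneg _)
        (by positivity)
    · exact mul_le_mul_of_nonneg_left (abs_centralMomentTerm_le hγ hn _ k hy.le hy₂.le)
        (by positivity)
  have hderiv := hasDerivAt_tsum_of_isPreconnected
    (((summable_centralMomentMajorant hγ hn (m + 1) (by positivity)).mul_left _).add
      ((summable_centralMomentMajorant hγ hn (m - 1) (by positivity)).mul_left _))
    isOpen_Ioo isPreconnected_Ioo
    (fun k y hy => hasDerivAt_centralMomentTerm hγ hn m k (by linarith [hy.1])) hbound hxt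
    (summable_centralMomentTerm hγ hn m hx) hxt
  refine hderiv.congr_deriv ?_
  rw [Summable.tsum_sub ((summable_centralMomentTerm hγ hn _ hx).mul_left _)
    ((summable_centralMomentTerm hγ hn _ hx).mul_left _), tsum_mul_left, tsum_mul_left]
  rfl

theorem U_succ_zero (m : ℕ) : U n (m + 1) γ 0 = 0 := by
  refine (tsum_congr fun k => ?_).trans tsum_zero
  rcases k with _ | k <;> simp [p]

end moments

theorem baskakov_central_moment_recurrence_general (n γ : ℝ) (m : ℕ)
    (hγ : 0 < γ) (hn : 0 < n) :
    ∀ x : ℝ, 0 ≤ x →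
      n * U n (m + 1) γ x =
        x * (1 + γ * x) * (deriv (fun y => U n m γ y) x + m * U n (m - 1) γ x) := by
  intro x hx
  rcases hx.eq_or_lt with rfl | hx
  · simp [U_succ_zero]
  · rw [(hasDerivAt_U hγ hn m hx).deriv]
    have : 1 + γ * x ≠ 0 := by positivity
    field_simp
    ring

theorem baskakov_central_moment_recurrence (n γ : ℝ) (m : ℕ)
    (hγ : 0 < γ) (hn : 0 < n) (hm : 1 ≤ m) :
    ∀ x : ℝ, 0 ≤ x →
      n * U n (m + 1) γ x =
        x * (1 + γ * x) * (deriv (fun y => U n m γ y) x + m * U n (m - 1) γ x) :=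
  baskakov_central_moment_recurrence_general n γ m hγ hn
end

section
/- For each fixed x ≥ 0 and γ > 0, the central moments of the Baskakov basis satisfy U_{n,m,γ}(x) = O(n^{−⌈(m)/2⌉}) as n → ∞; precisely, there exists C > 0 depending on m, x, γ such that |U_{n,m,γ}(x)| ≤ C·n^{−⌊(m+1)/2⌋} for all sufficiently large n. -/
/-!
With `r = n / γ` and `q = γx / (1 + γx)`, the weights `p_{n,k,γ}(x)` form the negative binomial
distribution with shape `r` and parameter `q`, whose mean is `rq / (1 - q) = nx`; hence
`U_{n,m,γ}(x) = n⁻ᵐ μ_m(r)` with `μ_m` its `m`-th central moment. The weights satisfy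
`(k + 1) w_{k+1} = q (r + k) w_k`, and shifting the summation index with it yields
`μ_{m+1} = ∑_{j<m} C(m,j) (q r / (1 - q)² μ_j + q / (1 - q) μ_{j+1})`.
The coefficient of `μ_j` grows like `r` while `j ≤ m - 1`, so by induction
`μ_m = O(r^⌊m/2⌋)`, and `m - ⌊m/2⌋ = ⌊(m+1)/2⌋`.
-/

open MeasureTheory Filter Real

open Asymptotics Finset Polynomial

lemma Real.Gamma_add_nat_eq_ascPochhammer_mul {r : ℝ} (hr : 0 < r) (k : ℕ) :
    Gamma (r + k) = (ascPochhammer ℝ k).eval r * Gamma r := by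
  induction k with
  | zero => simp
  | succ k ih =>
    rw [Nat.cast_succ, ← add_assoc, Gamma_add_one (by positivity), ih, ascPochhammer_succ_eval]
    ring

lemma pow_le_ascPochhammer_eval {S : Type*} [Semiring S] [PartialOrder S] [IsOrderedRing S]
    {s : S} (hs : 0 ≤ s) (m : ℕ) : s ^ m ≤ (ascPochhammer S m).eval s := by
  induction m with
  | zero => simp
  | succ m ih =>
    rw [pow_succ, ascPochhammer_succ_eval]
    exact mul_le_mul ih (le_add_of_nonneg_right m.cast_nonneg) hs ((pow_nonneg hs m).trans ih)

lemma Int.floor_natCast_add_one_div_two {K : Type*} [Field K] [LinearOrder K]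
    [IsStrictOrderedRing K] [FloorRing K] (m : ℕ) :
    ⌊((m : K) + 1) / 2⌋ = ((m + 1) / 2 : ℕ) := by
  have h : ((m : K) + 1) / 2 = ((m + 1 : ℕ) : K) / ((2 : ℕ) : K) := by push_cast; ring
  rw [h, Int.floor_div_natCast, Int.floor_natCast]
  omega

lemma isBigO_pow_of_binomial_recursion {M : ℝ → ℕ → ℝ} {a b : ℝ → ℝ}
    (ha : a =O[atTop] id) (hb : b =O[atTop] (fun _ => (1 : ℝ)))
    (h0 : (fun t => M t 0) =O[atTop] (fun _ => (1 : ℝ)))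
    (hrec : ∀ᶠ t in atTop, ∀ m, M t (m + 1) =
      ∑ j ∈ range m, (m.choose j : ℝ) * (a t * M t j + b t * M t (j + 1))) (m : ℕ) :
    (fun t => M t m) =O[atTop] (fun t => t ^ (m / 2)) := by
  induction m using Nat.strong_induction_on with
  | _ m ih =>
    cases m with
    | zero => simpa using h0
    | succ m =>
      have hpow {i : ℕ} (hi : i ≤ (m + 1) / 2) :
          (fun t : ℝ => t ^ i) =O[atTop] (fun t => t ^ ((m + 1) / 2)) :=
        (isBigO_pow_pow_cobounded_of_le hi).mono IsOrderBornology.atTop_le_cobounded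
      refine IsBigO.congr' ?_ (hrec.mono fun t ht => (ht m).symm) EventuallyEq.rfl
      refine IsBigO.fun_sum fun j hj => ?_
      have hjm : j < m := mem_range.1 hj
      refine (IsBigO.add ?_ ?_).const_mul_left _
      · refine (ha.mul (ih j (by omega))).trans ?_
        simpa only [id, ← pow_succ'] using hpow (i := j / 2 + 1) (by omega)
      · refine (hb.mul (ih (j + 1) (by omega))).trans ?_
        simpa only [one_mul] using hpow (i := (j + 1) / 2) (by omega)

noncomputable def negBinomialWeight (r q : ℝ) (k : ℕ) : ℝ :=
  Gamma (r + k) / (Gamma (k + 1) * Gamma r) * q ^ k * (1 - q) ^ r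

noncomputable def negBinomialExpectation (r q : ℝ) (P : ℝ[X]) : ℝ :=
  ∑' k : ℕ, negBinomialWeight r q k * P.eval (k : ℝ)

noncomputable def negBinomialCentralMoment (r q : ℝ) (m : ℕ) : ℝ :=
  negBinomialExpectation r q ((X - C (r * q / (1 - q))) ^ m)

section NegBinomial

variable {r q : ℝ}

lemma negBinomialWeight_eq_ascPochhammer (hr : 0 < r) (k : ℕ) :
    negBinomialWeight r q k = (ascPochhammer ℝ k).eval r / k.factorial * q ^ k * (1 - q) ^ r := by
  rw [negBinomialWeight, Gamma_add_nat_eq_ascPochhammer_mul hr, Gamma_nat_eq_factorial,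
    mul_div_mul_right _ _ (Gamma_pos_of_pos hr).ne']

lemma hasSum_negBinomialWeight (hr : 0 < r) (hq : |q| < 1) :
    HasSum (negBinomialWeight r q) 1 := by
  have h := (one_div_one_sub_rpow_hasFPowerSeriesOnBall_zero r).hasSum (y := q)
    (by simpa [enorm_eq_nnnorm, ← NNReal.coe_lt_coe] using hq)
  have hq1 : 0 < 1 - q := by linarith [le_abs_self q]
  simp only [FormalMultilinearSeries.ofScalars_apply_eq, smul_eq_mul, zero_add] at h
  have hchoose : negBinomialWeight r q =
      fun k : ℕ => Ring.choose (r + k - 1) k * q ^ k * (1 - q) ^ r := by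
    funext k
    rw [negBinomialWeight_eq_ascPochhammer hr, ← Ring.multichoose_eq,
      ← Polynomial.ascPochhammer_smeval_eq_eval,
      ← Ring.factorial_nsmul_multichoose_eq_ascPochhammer, nsmul_eq_mul]
    field_simp
  rw [hchoose]
  simpa [(rpow_pos_of_pos hq1 r).ne'] using h.mul_right ((1 - q) ^ r)

lemma negBinomialWeight_nonneg (hr : 0 < r) (hq0 : 0 ≤ q) (hq1 : q < 1) (k : ℕ) :
    0 ≤ negBinomialWeight r q k := by
  have := Gamma_pos_of_pos (show 0 < r + k by positivity)
  have := Gamma_pos_of_pos hr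
  have := Gamma_pos_of_pos (show (0 : ℝ) < k + 1 by positivity)
  have := rpow_pos_of_pos (sub_pos.2 hq1) r
  unfold negBinomialWeight
  positivity

lemma negBinomialWeight_mul_ascPochhammer (hr : 0 < r) (hq : q < 1) (m k : ℕ) :
    negBinomialWeight r q k * (ascPochhammer ℝ m).eval (r + k) * (1 - q) ^ m =
      (ascPochhammer ℝ m).eval r * negBinomialWeight (r + m) q k := by
  have hG := Gamma_pos_of_pos hr
  have hA := ascPochhammer_pos m r hr
  have hF : (0 : ℝ) < Gamma (k + 1) := Gamma_pos_of_pos (by positivity)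
  simp only [negBinomialWeight]
  rw [add_right_comm, Gamma_add_nat_eq_ascPochhammer_mul (show 0 < r + k by positivity) m,
    Gamma_add_nat_eq_ascPochhammer_mul hr m, rpow_add (sub_pos.2 hq), rpow_natCast]
  field_simp

/-- The `m`-th power is dominated by the rising factorial at `r + k`, which turns the weights of
shape `r` into those of shape `r + m`. -/
lemma summable_negBinomialWeight_mul_pow (hr : 0 < r) (hq0 : 0 ≤ q) (hq1 : q < 1) (m : ℕ) :
    Summable fun k : ℕ => negBinomialWeight r q k * (k : ℝ) ^ m := by
  have hq : |q| < 1 := by rwa [abs_of_nonneg hq0]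
  refine Summable.of_nonneg_of_le
    (fun k => mul_nonneg (negBinomialWeight_nonneg hr hq0 hq1 k) (by positivity)) (fun k => ?_)
    ((hasSum_negBinomialWeight (by positivity : 0 < r + m) hq).summable.mul_left
      ((ascPochhammer ℝ m).eval r / (1 - q) ^ m))
  have hpos : 0 < (1 - q) ^ m := pow_pos (sub_pos.2 hq1) m
  calc negBinomialWeight r q k * (k : ℝ) ^ m
      ≤ negBinomialWeight r q k * (ascPochhammer ℝ m).eval (r + k) :=
        mul_le_mul_of_nonneg_left
          ((pow_le_pow_left₀ k.cast_nonneg (by linarith) m).trans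
            (pow_le_ascPochhammer_eval (by positivity) m))
          (negBinomialWeight_nonneg hr hq0 hq1 k)
    _ = _ := by
        rw [div_mul_eq_mul_div, eq_div_iff hpos.ne', negBinomialWeight_mul_ascPochhammer hr hq1]

lemma summable_negBinomialWeight_mul_eval (hr : 0 < r) (hq0 : 0 ≤ q) (hq1 : q < 1) (P : ℝ[X]) :
    Summable fun k : ℕ => negBinomialWeight r q k * P.eval (k : ℝ) := by
  induction P using Polynomial.induction_on' with
  | add P Q hP hQ => simpa only [eval_add, mul_add] using hP.add hQ
  | monomial n a =>
    simpa only [eval_monomial, mul_left_comm] using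
      (summable_negBinomialWeight_mul_pow hr hq0 hq1 n).mul_left a

lemma natCast_add_one_mul_negBinomialWeight_succ (hr : 0 < r) (k : ℕ) :
    ((k : ℝ) + 1) * negBinomialWeight r q (k + 1) = q * (r + k) * negBinomialWeight r q k := by
  simp only [negBinomialWeight_eq_ascPochhammer hr, ascPochhammer_succ_eval, Nat.factorial_succ,
    pow_succ, Nat.cast_mul, Nat.cast_succ]
  field_simp

lemma isLinearMap_negBinomialExpectation (hr : 0 < r) (hq0 : 0 ≤ q) (hq1 : q < 1) :
    IsLinearMap ℝ (negBinomialExpectation r q) where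
  map_add P Q := by
    simp only [negBinomialExpectation, eval_add, mul_add]
    exact (summable_negBinomialWeight_mul_eval hr hq0 hq1 P).tsum_add
      (summable_negBinomialWeight_mul_eval hr hq0 hq1 Q)
  map_smul c P := by
    simp only [negBinomialExpectation, eval_smul, smul_eq_mul, mul_left_comm _ c]
    exact tsum_mul_left

lemma negBinomialExpectation_one (hr : 0 < r) (hq0 : 0 ≤ q) (hq1 : q < 1) :
    negBinomialExpectation r q 1 = 1 := by
  simpa [negBinomialExpectation] using
    (hasSum_negBinomialWeight hr (abs_lt.2 ⟨by linarith, hq1⟩)).tsum_eq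

lemma negBinomialExpectation_X_mul (hr : 0 < r) (hq0 : 0 ≤ q) (hq1 : q < 1) (P : ℝ[X]) :
    negBinomialExpectation r q (X * P) =
      q * negBinomialExpectation r q ((X + C r) * P.comp (X + 1)) := by
  rw [negBinomialExpectation, (summable_negBinomialWeight_mul_eval hr hq0 hq1 _).tsum_eq_zero_add,
    negBinomialExpectation, ← tsum_mul_left]
  simp only [eval_mul, eval_X, eval_add, eval_C, eval_comp, eval_one, Nat.cast_zero, zero_mul,
    mul_zero, zero_add, Nat.cast_succ]
  refine tsum_congr fun k => ?_
  linear_combination (eval ((k : ℝ) + 1) P) *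
    natCast_add_one_mul_negBinomialWeight_succ (q := q) hr k

lemma negBinomialCentralMoment_zero (hr : 0 < r) (hq0 : 0 ≤ q) (hq1 : q < 1) :
    negBinomialCentralMoment r q 0 = 1 := by
  rw [negBinomialCentralMoment, pow_zero, negBinomialExpectation_one hr hq0 hq1]

lemma negBinomialCentralMoment_succ (hr : 0 < r) (hq0 : 0 ≤ q) (hq1 : q < 1) (m : ℕ) :
    negBinomialCentralMoment r q (m + 1) = ∑ j ∈ range m, (m.choose j : ℝ) *
      (q / (1 - q) ^ 2 * r * negBinomialCentralMoment r q j +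
        q / (1 - q) * negBinomialCentralMoment r q (j + 1)) := by
  have hq : 1 - q ≠ 0 := by linarith
  set c := r * q / (1 - q)
  set Y : ℝ[X] := X - C c
  set μ := negBinomialCentralMoment r q
  let E := (isLinearMap_negBinomialExpectation hr hq0 hq1).mk'
  have hμ : ∀ j, μ j = E (Y ^ j) := fun _ => rfl
  have hlhs : X * Y ^ m = Y ^ (m + 1) + c • Y ^ m := by
    simp only [Y, smul_eq_C_mul]; ring
  have hrhs : (X + C r) * (Y ^ m).comp (X + 1) =
      ∑ j ∈ range (m + 1), (m.choose j : ℝ) • ((r + c) • Y ^ j + Y ^ (j + 1)) := by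
    have hY : (Y ^ m).comp (X + 1) = (Y + 1) ^ m := by simp [Y]; ring
    rw [hY, add_pow, mul_sum]
    refine sum_congr rfl fun j _ => ?_
    simp only [Y, smul_eq_C_mul, one_pow, mul_one, C_add, C_eq_natCast]
    ring
  have hshift := negBinomialExpectation_X_mul hr hq0 hq1 (Y ^ m)
  rw [hlhs, hrhs] at hshift
  change E _ = q * E _ at hshift
  simp only [map_add, map_sum, map_smul, smul_eq_mul, ← hμ, sum_range_succ, Nat.choose_self,
    Nat.cast_one, one_mul] at hshift
  have hmean : q * (r + c) = c := by simp only [c]; field_simp; ring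
  have hsum : ∑ j ∈ range m, (m.choose j : ℝ) *
      (q / (1 - q) ^ 2 * r * μ j + q / (1 - q) * μ (j + 1)) =
      q / (1 - q) * ∑ j ∈ range m, (m.choose j : ℝ) * ((r + c) * μ j + μ (j + 1)) := by
    rw [mul_sum]
    refine sum_congr rfl fun j _ => ?_
    simp only [c]
    field_simp
    ring
  rw [hsum, div_mul_eq_mul_div, eq_div_iff hq]
  linear_combination hshift + μ m * hmean

theorem negBinomialCentralMoment_isBigO (hq0 : 0 ≤ q) (hq1 : q < 1) (m : ℕ) :
    (fun r => negBinomialCentralMoment r q m) =O[atTop] (fun r => r ^ (m / 2)) := by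
  refine isBigO_pow_of_binomial_recursion (a := fun r => q / (1 - q) ^ 2 * r)
    ((isBigO_refl id atTop).const_mul_left _) (isBigO_const_one ℝ (q / (1 - q)) atTop) ?_ ?_ m
  · refine (isBigO_const_one ℝ (1 : ℝ) atTop).congr' ?_ EventuallyEq.rfl
    filter_upwards [eventually_gt_atTop 0] with r hr
    exact (negBinomialCentralMoment_zero hr hq0 hq1).symm
  · filter_upwards [eventually_gt_atTop 0] with r hr m
    exact negBinomialCentralMoment_succ hr hq0 hq1 m

end NegBinomial

lemma negBinomialWeight_div_one_add {s : ℝ} (hs : 0 < 1 + s) (r : ℝ) (k : ℕ) :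
    negBinomialWeight r (s / (1 + s)) k =
      Gamma (r + k) / (Gamma (k + 1) * Gamma r) * s ^ k / (1 + s) ^ (r + k) := by
  have h1 : 1 - s / (1 + s) = (1 + s)⁻¹ := by field_simp; ring
  rw [negBinomialWeight, h1, inv_rpow hs.le, rpow_add hs, rpow_natCast, div_pow]
  field_simp

lemma U_eq_negBinomialCentralMoment {n γ x : ℝ} (hn : 0 < n) (hγ : 0 < γ) (hx : 0 ≤ x) (m : ℕ) :
    U n m γ x = (n ^ m)⁻¹ * negBinomialCentralMoment (n / γ) (γ * x / (1 + γ * x)) m := by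
  have hs : 0 < 1 + γ * x := by positivity
  have hmean : n / γ * (γ * x / (1 + γ * x)) / (1 - γ * x / (1 + γ * x)) = n * x := by
    field_simp; ring
  rw [U, negBinomialCentralMoment, negBinomialExpectation, hmean, ← tsum_mul_left]
  refine tsum_congr fun k => ?_
  rw [negBinomialWeight_div_one_add hs, p, eval_pow, eval_sub, eval_X, eval_C,
    show (k : ℝ) / n - x = (k - n * x) / n by field_simp, div_pow]
  field_simp

theorem baskakov_central_moment_order (γ x : ℝ) (m : ℕ) (hx : 0 ≤ x) (hγ : 0 < γ) :
    ∃ C > 0, ∀ᶠ n : ℝ in atTop,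
      |U n m γ x| ≤ C * n ^ (-(⌊((m : ℝ) + 1) / 2⌋ : ℝ)) := by
  have hs : 0 < 1 + γ * x := by positivity
  have hq1 : γ * x / (1 + γ * x) < 1 := (div_lt_one hs).2 (by linarith)
  have hmoment := (negBinomialCentralMoment_isBigO (by positivity) hq1 m).comp_tendsto
    (tendsto_id.atTop_div_const hγ)
  have hU : (fun n => (n ^ m)⁻¹ * negBinomialCentralMoment (n / γ) (γ * x / (1 + γ * x)) m)
      =ᶠ[atTop] fun n => U n m γ x :=
    (eventually_gt_atTop 0).mono fun n hn => (U_eq_negBinomialCentralMoment hn hγ hx m).symm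
  have hrate : (fun n : ℝ => (n ^ m)⁻¹ * (n / γ) ^ (m / 2)) =ᶠ[atTop]
      fun n => (γ ^ (m / 2))⁻¹ * n ^ (-(⌊((m : ℝ) + 1) / 2⌋ : ℝ)) := by
    filter_upwards [eventually_gt_atTop 0] with n hn
    rw [Int.floor_natCast_add_one_div_two, Int.cast_natCast, rpow_neg hn.le, rpow_natCast,
      div_pow, show n ^ m = n ^ (m / 2) * n ^ ((m + 1) / 2) by rw [← pow_add]; congr 1; omega]
    field_simp
  obtain ⟨C, hC, hCO⟩ :=
    (((isBigO_refl (fun n : ℝ => (n ^ m)⁻¹) atTop).mul hmoment).congr' hU hrate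
      |>.trans ((isBigO_refl _ _).const_mul_left _)).exists_pos
  refine ⟨C, hC, ?_⟩
  filter_upwards [hCO.bound, eventually_gt_atTop 0] with n h hn
  rwa [Real.norm_eq_abs, Real.norm_of_nonneg (rpow_nonneg hn.le _)] at h
end

section
/- For r ≥ 1 and n > γr, there exist polynomials Q_{i,j,r,γ}(x), independent of n and k, such that (x(1+γx))^r · D^r[p_{n,k,γ}(x)] = ∑_{2i+j ≤ r, i,j ≥ 0} n^i·(k − nx)^j·Q_{i,j,r,γ}(x)·p_{n,k,γ}(x), where D = d/dx. -/
open MeasureTheory Filter Real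

/-!
Write `w x = x * (1 + γ * x)` for the weight. The Baskakov basis function satisfies `w * p' = (k - n x) * p`,
so if `w ^ r * D^r p = F * p`, differentiating and multiplying by `w` gives
`w ^ (r + 1) * D^(r + 1) p = (w * F' + (k - n x - r * w') * F) * p`.
This operation preserves the shape `∑_{2i+j ≤ r} n^i (k - n x)^j Q_{ij}(x)` with `r` raised by one:
differentiating `(k - n x)^j` trades a factor `k - n x` for a factor `n`, and multiplying by
`k - n x` adds one, each raising `2i + j` by at most one.
-/

open Polynomial Finset
open scoped ContDiff Topology

def weightedIndices (r : ℕ) : Finset (ℕ × ℕ) :=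
  (range (r + 1) ×ˢ range (r + 1)).filter fun ij => 2 * ij.1 + ij.2 ≤ r

theorem mem_weightedIndices {r : ℕ} {ij : ℕ × ℕ} :
    ij ∈ weightedIndices r ↔ 2 * ij.1 + ij.2 ≤ r := by
  simp only [weightedIndices, mem_filter, mem_product, mem_range]
  omega

theorem hasDerivAt_monomial (n : ℝ) (k i j : ℕ) (P : ℝ[X]) (x : ℝ) :
    HasDerivAt (fun y => n ^ i * ((k : ℝ) - n * y) ^ j * P.eval y)
      (n ^ i * (j * ((k : ℝ) - n * x) ^ (j - 1) * -n) * P.eval x +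
        n ^ i * ((k : ℝ) - n * x) ^ j * P.derivative.eval x) x := by
  have ht : HasDerivAt (fun y => (k : ℝ) - n * y) (-n) x := by
    simpa using ((hasDerivAt_id x).const_mul n).const_sub (k : ℝ)
  exact ((ht.pow j).const_mul (n ^ i)).mul (P.hasDerivAt x)

def IsBaskakovForm (r : ℕ) (F : ℝ → ℕ → ℝ → ℝ) : Prop :=
  ∃ Q : ℕ → ℕ → ℝ[X], F = fun (n : ℝ) (k : ℕ) (x : ℝ) =>
    ∑ ij ∈ weightedIndices r, n ^ ij.1 * ((k : ℝ) - n * x) ^ ij.2 * (Q ij.1 ij.2).eval x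

namespace IsBaskakovForm

variable {r : ℕ} {F G : ℝ → ℕ → ℝ → ℝ}

theorem zero (r : ℕ) : IsBaskakovForm r fun _ _ _ => 0 :=
  ⟨0, by simp⟩

theorem add (hF : IsBaskakovForm r F) (hG : IsBaskakovForm r G) :
    IsBaskakovForm r fun n k x => F n k x + G n k x := by
  obtain ⟨Q, rfl⟩ := hF
  obtain ⟨R, rfl⟩ := hG
  exact ⟨Q + R, by simp only [Pi.add_apply, eval_add, mul_add, sum_add_distrib]⟩

theorem sum {ι : Type*} (s : Finset ι) {F : ι → ℝ → ℕ → ℝ → ℝ}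
    (hF : ∀ a ∈ s, IsBaskakovForm r (F a)) :
    IsBaskakovForm r fun n k x => ∑ a ∈ s, F a n k x := by
  classical
  induction s using Finset.induction_on with
  | empty => simpa using zero r
  | insert a s ha ih =>
    simp only [sum_insert ha]
    exact (hF a (mem_insert_self a s)).add (ih fun b hb => hF b (mem_insert_of_mem hb))

theorem monomial {i j : ℕ} (h : 2 * i + j ≤ r) (P : ℝ[X]) :
    IsBaskakovForm r fun n k x => n ^ i * ((k : ℝ) - n * x) ^ j * P.eval x := by
  refine ⟨fun a b => if (a, b) = (i, j) then P else 0, ?_⟩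
  ext n k x
  rw [sum_eq_single_of_mem (i, j) (mem_weightedIndices.2 h) fun ij _ hij => by simp [hij]]
  simp

theorem differentiable (hF : IsBaskakovForm r F) (n : ℝ) (k : ℕ) : Differentiable ℝ (F n k) := by
  obtain ⟨Q, rfl⟩ := hF
  fun_prop

theorem polynomial_mul (hF : IsBaskakovForm r F) (P : ℝ[X]) :
    IsBaskakovForm r fun n k x => P.eval x * F n k x := by
  obtain ⟨Q, rfl⟩ := hF
  refine ⟨fun i j => P * Q i j, ?_⟩
  ext n k x
  simp only [mul_sum, eval_mul]
  exact sum_congr rfl fun _ _ => by ring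

theorem mono {s : ℕ} (hF : IsBaskakovForm r F) (hrs : r ≤ s) : IsBaskakovForm s F := by
  obtain ⟨Q, rfl⟩ := hF
  exact sum _ fun ij hij => monomial (by have := mem_weightedIndices.1 hij; omega) _

theorem sub_mul_succ (hF : IsBaskakovForm r F) :
    IsBaskakovForm (r + 1) fun n k x => ((k : ℝ) - n * x) * F n k x := by
  obtain ⟨Q, rfl⟩ := hF
  simp only [mul_sum]
  refine sum _ fun ij hij => ?_
  convert monomial (r := r + 1) (i := ij.1) (j := ij.2 + 1)
    (by have := mem_weightedIndices.1 hij; omega) (Q ij.1 ij.2) using 1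
  funext n k x
  ring

theorem mul_deriv_succ (hF : IsBaskakovForm r F) (W : ℝ[X]) :
    IsBaskakovForm (r + 1) fun n k x => W.eval x * deriv (F n k) x := by
  obtain ⟨Q, rfl⟩ := hF
  have hderiv (n : ℝ) (k : ℕ) (x : ℝ) := (HasDerivAt.fun_sum (u := weightedIndices r)
    fun ij _ => hasDerivAt_monomial n k ij.1 ij.2 (Q ij.1 ij.2) x).deriv
  simp only [hderiv, mul_sum]
  refine sum _ fun ⟨i, j⟩ hij => ?_
  have hij := mem_weightedIndices.1 hij
  rcases j with _ | j
  · convert monomial (r := r + 1) (i := i) (j := 0) (by omega) (W * (Q i 0).derivative) using 1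
    funext n k x
    simp only [CharP.cast_eq_zero, zero_tsub, eval_mul]
    ring
  · convert (monomial (r := r + 1) (i := i + 1) (j := j) (by omega)
      (-((j : ℝ[X]) + 1) * W * Q i (j + 1))).add
      (monomial (i := i) (j := j + 1) (by omega) (W * (Q i (j + 1)).derivative)) using 1
    funext n k x
    simp only [Nat.cast_add, Nat.cast_one, add_tsub_cancel_right, eval_mul, eval_add, eval_neg,
      eval_one, eval_natCast]
    ring

theorem weight_mul_deriv_add (hF : IsBaskakovForm r F) (γ : ℝ) :
    IsBaskakovForm (r + 1) fun n k x => x * (1 + γ * x) * deriv (F n k) x +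
      ((k : ℝ) - n * x - r * (1 + 2 * γ * x)) * F n k x := by
  convert ((hF.mul_deriv_succ (X * (1 + C γ * X))).add hF.sub_mul_succ).add
    ((hF.polynomial_mul (-C (r : ℝ) * (1 + C (2 * γ) * X))).mono r.le_succ) using 1
  funext n k x
  simp only [eval_mul, eval_X, eval_add, eval_one, eval_C, eval_neg]
  ring

end IsBaskakovForm

theorem ContDiffAt.differentiableAt_iteratedDeriv {𝕜 F : Type*} [NontriviallyNormedField 𝕜]
    [NormedAddCommGroup F] [NormedSpace 𝕜 F] {f : 𝕜 → F} {x : 𝕜} {n : WithTop ℕ∞} {m : ℕ}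
    (h : ContDiffAt 𝕜 n f x) (hmn : m < n) : DifferentiableAt 𝕜 (iteratedDeriv m f) x := by
  simpa only [iteratedDeriv_eq_equiv_comp, LinearIsometryEquiv.comp_differentiableAt_iff]
    using h.differentiableAt_iteratedFDeriv hmn

theorem pow_succ_mul_iteratedDeriv_succ {𝕜 : Type*} [NontriviallyNormedField 𝕜]
    {w g F : 𝕜 → 𝕜} {w' F' x : 𝕜} {r : ℕ}
    (hw : HasDerivAt w w' x) (hF : HasDerivAt F F' x) (hg : DifferentiableAt 𝕜 g x)
    (hgr : DifferentiableAt 𝕜 (iteratedDeriv r g) x)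
    (heq : (fun y => w y ^ r * iteratedDeriv r g y) =ᶠ[𝓝 x] fun y => F y * g y) :
    w x ^ (r + 1) * iteratedDeriv (r + 1) g x =
      (w x * F' - r * w' * F x) * g x + F x * (w x * deriv g x) := by
  have hlhs := (hw.pow r).mul hgr.hasDerivAt
  rw [← iteratedDeriv_succ] at hlhs
  have hderiv := hlhs.unique ((hF.mul hg.hasDerivAt).congr_of_eventuallyEq heq)
  have hval : w x ^ r * iteratedDeriv r g x = F x * g x := heq.eq_of_nhds
  rcases r with _ | r
  · simp only [Pi.pow_apply, pow_zero, pow_one, Nat.cast_zero, zero_mul, zero_add,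
      one_mul] at hderiv ⊢
    linear_combination w x * hderiv
  · simp only [Pi.pow_apply, Nat.add_sub_cancel, Nat.cast_add, Nat.cast_one] at hderiv ⊢
    linear_combination w x * hderiv - (r + 1) * w' * hval

theorem contDiffAt_p (n γ : ℝ) (k : ℕ) {x : ℝ} (hx : 0 < 1 + γ * x) :
    ContDiffAt ℝ ∞ (p n γ k) x :=
  ((contDiffAt_const.mul ((contDiffAt_const.mul contDiffAt_id).pow k)).div
    ((contDiffAt_const.add (contDiffAt_const.mul contDiffAt_id)).rpow_const_of_ne hx.ne')
    (Real.rpow_pos_of_pos hx _).ne')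

theorem weight_mul_deriv_p (n : ℝ) {γ : ℝ} (hγ : γ ≠ 0) (k : ℕ) {x : ℝ} (hx : 0 < 1 + γ * x) :
    x * (1 + γ * x) * deriv (p n γ k) x = ((k : ℝ) - n * x) * p n γ k x := by
  set a := n / γ + (k : ℝ)
  set c := Real.Gamma a / (Real.Gamma ((k : ℝ) + 1) * Real.Gamma (n / γ))
  have hnum : HasDerivAt (fun y => c * (γ * y) ^ k) (c * (k * (γ * x) ^ (k - 1) * γ)) x := by
    simpa using (((hasDerivAt_id x).const_mul γ).pow k).const_mul c
  have hden : HasDerivAt (fun y => (1 + γ * y) ^ a) (γ * a * (1 + γ * x) ^ (a - 1)) x := by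
    simpa [mul_assoc] using (((hasDerivAt_id x).const_mul γ).const_add 1).rpow_const
      (p := a) (Or.inl hx.ne')
  have hA := Real.rpow_pos_of_pos hx a
  have hp : p n γ k = fun y => c * (γ * y) ^ k / (1 + γ * y) ^ a := rfl
  have hpow : (1 + γ * x) ^ (a - 1) = (1 + γ * x) ^ a / (1 + γ * x) :=
    Real.rpow_sub_one hx.ne' a
  have hk : (k : ℝ) * (γ * x) ^ (k - 1) * (γ * x) = k * (γ * x) ^ k := by
    rcases k with _ | k
    · simp
    · rw [Nat.add_sub_cancel, pow_succ]; ring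
  have ha : γ * a = n + k * γ := by
    simp only [a]; field_simp
  rw [hp, (hnum.fun_div hden hA.ne').deriv, hpow, ha]
  have hb : 1 + γ * x ≠ 0 := hx.ne'
  beta_reduce
  generalize (1 + γ * x) ^ a = B at hA ⊢
  generalize hbdef : 1 + γ * x = b at hb ⊢
  field_simp
  linear_combination c * b * hk - c * k * (γ * x) ^ k * hbdef

theorem exists_isBaskakovForm_weight_pow_mul_iteratedDeriv {γ : ℝ} (hγ : γ ≠ 0) (r : ℕ) :
    ∃ F, IsBaskakovForm r F ∧ ∀ n k x, 0 < 1 + γ * x →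
      (x * (1 + γ * x)) ^ r * iteratedDeriv r (p n γ k) x = F n k x * p n γ k x := by
  induction r with
  | zero =>
    have h1 := IsBaskakovForm.monomial (r := 0) (i := 0) (j := 0) le_rfl 1
    exact ⟨fun _ _ _ => 1, by simpa using h1, by simp⟩
  | succ r ih =>
    obtain ⟨F, hF, hrep⟩ := ih
    refine ⟨_, hF.weight_mul_deriv_add γ, fun n k x hx => ?_⟩
    have hnhds : {y : ℝ | 0 < 1 + γ * y} ∈ 𝓝 x :=
      (isOpen_lt continuous_const (by fun_prop)).mem_nhds hx
    have hw := (hasDerivAt_id' x).fun_mul (((hasDerivAt_id' x).const_mul γ).const_add 1)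
    have hp := contDiffAt_p n γ k hx
    have hr : (r : WithTop ℕ∞) < ∞ := by exact_mod_cast ENat.natCast_lt_top r
    rw [pow_succ_mul_iteratedDeriv_succ hw (hF.differentiable n k x).hasDerivAt
      (hp.differentiableAt (by simp)) (hp.differentiableAt_iteratedDeriv hr)
      (eventually_of_mem hnhds fun y hy => hrep n k y hy), weight_mul_deriv_p n hγ k hx]
    ring

theorem baskakov_deriv_polynomial_decomposition_general (γ : ℝ) (r : ℕ) (hγ : 0 < γ) :
    ∃ Q : ℕ → ℕ → Polynomial ℝ,
      ∀ (n : ℝ), γ * r < n → ∀ (k : ℕ) (x : ℝ), 0 ≤ x →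
        (x * (1 + γ * x)) ^ r * iteratedDeriv r (fun y => p n γ k y) x =
          ∑ ij ∈ (Finset.range (r + 1) ×ˢ Finset.range (r + 1)).filter
              (fun ij => 2 * ij.1 + ij.2 ≤ r),
            n ^ ij.1 * ((k : ℝ) - n * x) ^ ij.2 * (Q ij.1 ij.2).eval x * p n γ k x := by
  obtain ⟨_, ⟨Q, rfl⟩, hrep⟩ := exists_isBaskakovForm_weight_pow_mul_iteratedDeriv hγ.ne' r
  refine ⟨Q, fun n _ k x hx => ?_⟩
  exact (hrep n k x (by positivity)).trans (sum_mul _ _ _)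

theorem baskakov_deriv_polynomial_decomposition (γ : ℝ) (r : ℕ) (hγ : 0 < γ) (hr : 1 ≤ r) :
    ∃ Q : ℕ → ℕ → Polynomial ℝ,
      ∀ (n : ℝ), γ * r < n → ∀ (k : ℕ) (x : ℝ), 0 ≤ x →
        (x * (1 + γ * x)) ^ r * iteratedDeriv r (fun y => p n γ k y) x =
          ∑ ij ∈ (Finset.range (r + 1) ×ˢ Finset.range (r + 1)).filter
              (fun ij => 2 * ij.1 + ij.2 ≤ r),
            n ^ ij.1 * ((k : ℝ) - n * x) ^ ij.2 * (Q ij.1 ij.2).eval x * p n γ k x :=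
  baskakov_deriv_polynomial_decomposition_general γ r hγ
end
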